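/- arXiv:2508.12004 — 6 statements merged into one kernel-verified Lean document; each statement's English description precedes it below -/
import Mathlib

section
/- Let H be a simple graph and let M be a uniquely restricted matching in the line graph L(H). Let E_M ⊆ E(H) be the set of edges of H that correspond to the M-saturated vertices of L(H). Then the edge-induced subgraph H[E_M] is a forest. -/
namespace URM

open SimpleGraph

variable {V : Type*}

/-- A matching (given as a subgraph all of whose vertices are matched) is *uniquely restricted*
if the subgraph induced on its saturated vertices has exactly one perfect matching, i.e. every
perfect matching of that induced subgraph equals `M`. -/
def IsUniquelyRestricted {G : SimpleGraph V} (M : G.Subgraph) : Prop :=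
  M.IsMatching ∧ ∀ M' : G.Subgraph, M'.verts = M.verts → M'.IsMatching → M' = M

/-- `a`, `b`, `c` are the successive vertices of a path of length 2 in `H` (with middle
vertex `b`). -/
def IsPath2 (H : SimpleGraph V) (a b c : V) : Prop :=
  H.Adj a b ∧ H.Adj b c ∧ a ≠ c

/-- The two edges of a path of length 2 given by vertices `a`, `b`, `c`. -/
def path2Edges (a b c : V) : Set (Sym2 V) :=
  {s(a, b), s(b, c)}

/-- The edge-induced subgraph `H[E']`: its edges are the edges of `H` belonging to `E'` and its
vertices are the endpoints of those edges. -/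
def edgeInduced (H : SimpleGraph V) (E' : Set (Sym2 V)) : H.Subgraph where
  verts := {v | ∃ e ∈ E' ∩ H.edgeSet, v ∈ e}
  Adj v w := s(v, w) ∈ E' ∧ H.Adj v w
  adj_sub h := h.2
  edge_vert h := ⟨s(_, _), ⟨h.1, (SimpleGraph.mem_edgeSet H).mpr h.2⟩, by simp⟩
  symm := by
    constructor
    intro v w h
    refine ⟨?_, h.2.symm⟩
    rw [Sym2.eq_swap]
    exact h.1

/-- A vertex of degree one. -/
def IsLeaf (F : SimpleGraph V) (u : V) : Prop := ∃! w, F.Adj u w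

/-!
Suppose `H[E_M]` contains a cycle `w 0, w 1, …, w (n - 1)` with edges `e i = w i w (i + 1)`.
Each `e i` is matched in `M` to an edge `μ (e i)` sharing one of its ends, and we move every `e i`
to its other end. At the vertex `w (j + 1)` where `e j` and `e (j + 1)` meet, unless these two are
matched to each other, each of them leaves one edge to be rematched there: its partner if it was
matched through `w (j + 1)`, otherwise itself. Matching these two edges to each other and keeping
`M` elsewhere gives a second perfect matching of `L(H)[V_M]`, so `M` is not uniquely restricted.
-/

section Matching

variable {G : SimpleGraph V} {M : G.Subgraph}

theorem IsUniquelyRestricted.adj_of_isMatching (hM : IsUniquelyRestricted M) {N : G.Subgraph}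
    (hN : N.IsMatching) (hNM : N.verts ⊆ M.verts)
    (hclosed : ∀ ⦃x y⦄, M.Adj x y → x ∈ N.verts → y ∈ N.verts) {x y : V} (hxy : N.Adj x y) :
    M.Adj x y := by
  set R := M.induce (M.verts \ N.verts)
  have hR : R.IsMatching := by
    intro x hx
    obtain ⟨y, hxy, huniq⟩ := hM.1 hx.1
    exact ⟨y, ⟨hx, ⟨M.edge_vert hxy.symm, fun hy => hx.2 (hclosed hxy.symm hy)⟩, hxy⟩,
      fun z hz => huniq z hz.2.2⟩
  have hdisj : Disjoint N.support R.support := by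
    rw [hN.support_eq_verts, hR.support_eq_verts]
    exact Set.disjoint_sdiff_right
  have hverts : (N ⊔ R).verts = M.verts := by
    simp [R, Set.union_sdiff_cancel hNM]
  rw [← hM.2 _ hverts (hN.sup hR hdisj)]
  exact Or.inl hxy

variable {μ : V → V}

theorem eq_partner_of_adj (hM : M.IsMatching) (hμ : ∀ x ∈ M.verts, M.Adj x (μ x)) {x y : V}
    (hxy : M.Adj x y) : y = μ x :=
  hM.eq_of_adj_left hxy (hμ x (M.edge_vert hxy))

theorem partner_partner (hM : M.IsMatching) (hμ : ∀ x ∈ M.verts, M.Adj x (μ x)) {x : V}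
    (hx : x ∈ M.verts) : μ (μ x) = x :=
  (eq_partner_of_adj hM hμ (hμ x hx).symm).symm

theorem eq_or_eq_partner_of_adj (hM : M.IsMatching) (hμ : ∀ x ∈ M.verts, M.Adj x (μ x))
    {x y a b : V} (hx : x ∈ M.verts) (hy : y ∈ M.verts) (ha : a = x ∨ a = μ x)
    (hb : b = y ∨ b = μ y) (hab : M.Adj a b) : y = x ∨ y = μ x := by
  have hb' : b = μ x ∨ b = x := by
    rcases ha with rfl | rfl
    · exact Or.inl (eq_partner_of_adj hM hμ hab)
    · exact Or.inr (hM.eq_of_adj_left hab (hμ x hx).symm)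
  rcases hb with rfl | rfl
  · exact hb'.symm
  · rcases hb' with h | h
    · exact Or.inl (by rw [← partner_partner hM hμ hy, h, partner_partner hM hμ hx])
    · exact Or.inr (by rw [← h, partner_partner hM hμ hy])

end Matching

section LineGraph

variable {H : SimpleGraph V} {M : H.lineGraph.Subgraph} {μ : H.edgeSet → H.edgeSet}

theorem partner_ne (hμ : ∀ x ∈ M.verts, M.Adj x (μ x)) {x : H.edgeSet} (hx : x ∈ M.verts) :
    μ x ≠ x :=
  (M.adj_sub (hμ x hx)).ne.symm

theorem exists_mem_partner (hμ : ∀ x ∈ M.verts, M.Adj x (μ x)) {x : H.edgeSet}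
    (hx : x ∈ M.verts) : ∃ v ∈ (x : Sym2 V), v ∈ (μ x : Sym2 V) :=
  (lineGraph_adj_iff_exists.mp (M.adj_sub (hμ x hx))).2

theorem not_mem_partner_of_mem_partner (hμ : ∀ x ∈ M.verts, M.Adj x (μ x)) {x : H.edgeSet}
    (hx : x ∈ M.verts) {a b : V} (hab : a ≠ b) (ha : a ∈ (x : Sym2 V)) (hb : b ∈ (x : Sym2 V))
    (haμ : a ∈ (μ x : Sym2 V)) : b ∉ (μ x : Sym2 V) :=
  fun hbμ => partner_ne hμ hx (Subtype.ext (Sym2.eq_of_ne_mem hab haμ hbμ ha hb))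

theorem mem_partner_or (hμ : ∀ x ∈ M.verts, M.Adj x (μ x)) {x : H.edgeSet} (hx : x ∈ M.verts)
    {a b : V} (hab : a ≠ b) (ha : a ∈ (x : Sym2 V)) (hb : b ∈ (x : Sym2 V)) :
    a ∈ (μ x : Sym2 V) ∨ b ∈ (μ x : Sym2 V) := by
  obtain ⟨v, hv, hvμ⟩ := exists_mem_partner hμ hx
  rw [(Sym2.mem_and_mem_iff hab).mp ⟨ha, hb⟩, Sym2.mem_iff] at hv
  rcases hv with rfl | rfl
  exacts [Or.inl hvμ, Or.inr hvμ]

open Classical in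
/-- The edge to be rematched at the end `v` of `x`: if `x` is matched through `v`, it leaves `v`
and its partner `μ x` is left there without one; otherwise `x` itself arrives at `v`. -/
noncomputable def rematchAt (μ : H.edgeSet → H.edgeSet) (x : H.edgeSet) (v : V) : H.edgeSet :=
  if v ∈ (μ x : Sym2 V) then μ x else x

theorem rematchAt_of_mem {x : H.edgeSet} {v : V} (h : v ∈ (μ x : Sym2 V)) :
    rematchAt μ x v = μ x :=
  if_pos h

theorem rematchAt_of_not_mem {x : H.edgeSet} {v : V} (h : v ∉ (μ x : Sym2 V)) :
    rematchAt μ x v = x :=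
  if_neg h

theorem rematchAt_eq_or (x : H.edgeSet) (v : V) :
    rematchAt μ x v = x ∨ rematchAt μ x v = μ x := by
  by_cases h : v ∈ (μ x : Sym2 V)
  exacts [Or.inr (rematchAt_of_mem h), Or.inl (rematchAt_of_not_mem h)]

theorem mem_rematchAt {x : H.edgeSet} {v : V} (hv : v ∈ (x : Sym2 V)) :
    v ∈ (rematchAt μ x v : Sym2 V) := by
  unfold rematchAt
  split_ifs with h <;> assumption

theorem rematchAt_mem_verts (hμ : ∀ x ∈ M.verts, M.Adj x (μ x)) {x : H.edgeSet}
    (hx : x ∈ M.verts) (v : V) : rematchAt μ x v ∈ M.verts := by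
  rcases rematchAt_eq_or x v with h | h <;> rw [h]
  exacts [hx, M.edge_vert (hμ x hx).symm]

theorem rematchAt_ne_rematchAt (hμ : ∀ x ∈ M.verts, M.Adj x (μ x)) {x : H.edgeSet}
    (hx : x ∈ M.verts) {a b : V} (hab : a ≠ b) (ha : a ∈ (x : Sym2 V)) (hb : b ∈ (x : Sym2 V)) :
    rematchAt μ x a ≠ rematchAt μ x b := by
  have := not_mem_partner_of_mem_partner hμ hx hab ha hb
  have := mem_partner_or hμ hx hab ha hb
  have := partner_ne hμ hx
  unfold rematchAt
  split_ifs <;> tauto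

end LineGraph

section SaturatedCycle

variable {H : SimpleGraph V} {M : H.lineGraph.Subgraph} {μ : H.edgeSet → H.edgeSet} {n : ℕ}
  {w : ZMod n → V} {e : ZMod n → H.edgeSet}

/-- For `n = 0` (`ZMod 0 = ℤ`), `w` is a two-way infinite path rather than a cycle. -/
structure IsSaturatedCycle (M : H.lineGraph.Subgraph) (μ : H.edgeSet → H.edgeSet)
    (w : ZMod n → V) (e : ZMod n → H.edgeSet) : Prop where
  isMatching : M.IsMatching
  adj_partner : ∀ x ∈ M.verts, M.Adj x (μ x)
  two_ne_zero : (2 : ZMod n) ≠ 0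
  injective : Function.Injective w
  coe_edge : ∀ i, (e i : Sym2 V) = s(w i, w (i + 1))
  edge_mem_verts : ∀ i, e i ∈ M.verts

def rematchedSet (μ : H.edgeSet → H.edgeSet) (w : ZMod n → V) (e : ZMod n → H.edgeSet) :
    Set H.edgeSet :=
  {x | ∃ j, μ (e j) ≠ e (j + 1) ∧
    (x = rematchAt μ (e j) (w (j + 1)) ∨ x = rematchAt μ (e (j + 1)) (w (j + 1)))}

namespace IsSaturatedCycle

theorem add_one_ne (hC : IsSaturatedCycle M μ w e) (j : ZMod n) : j + 1 ≠ j :=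
  fun h => hC.two_ne_zero (by linear_combination 2 * h)

theorem mem_edge_iff (hC : IsSaturatedCycle M μ w e) {k m : ZMod n} :
    w m ∈ (e k : Sym2 V) ↔ m = k ∨ m = k + 1 := by
  rw [hC.coe_edge, Sym2.mem_iff, hC.injective.eq_iff, hC.injective.eq_iff]

theorem mem_edge_of_eq_or_eq (hC : IsSaturatedCycle M μ w e) {i j : ZMod n}
    (hi : i = j ∨ i = j + 1) : w (j + 1) ∈ (e i : Sym2 V) := by
  rcases hi with rfl | rfl <;> simp [hC.mem_edge_iff]

theorem edge_injective (hC : IsSaturatedCycle M μ w e) : Function.Injective e := by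
  intro i k h
  have h' := congrArg Subtype.val h
  simp only [hC.coe_edge, Sym2.eq_iff, hC.injective.eq_iff] at h'
  rcases h' with ⟨rfl, -⟩ | ⟨h₁, h₂⟩
  · rfl
  · exact (hC.two_ne_zero (by linear_combination h₂ - h₁)).elim

theorem partner_partner (hC : IsSaturatedCycle M μ w e) (i : ZMod n) : μ (μ (e i)) = e i :=
  URM.partner_partner hC.isMatching hC.adj_partner (hC.edge_mem_verts i)

theorem rematchAt_eq_or_not_mem_range (hC : IsSaturatedCycle M μ w e) {i j : ZMod n}
    (hj : μ (e j) ≠ e (j + 1)) (hi : i = j ∨ i = j + 1) :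
    rematchAt μ (e i) (w (j + 1)) = e i ∨ rematchAt μ (e i) (w (j + 1)) ∉ Set.range e := by
  unfold rematchAt
  split_ifs with hv
  · right
    rintro ⟨k, hk⟩
    rw [← hk, hC.mem_edge_iff] at hv
    have hne := partner_ne hC.adj_partner (hC.edge_mem_verts i)
    rcases hi with rfl | rfl <;> rcases hv with rfl | hv
    · exact hj hk.symm
    · exact hne (by rw [← hk, add_right_cancel hv])
    · exact hne hk.symm
    · rw [← add_right_cancel hv] at hk
      exact hj (by rw [hk, hC.partner_partner])
  · exact Or.inl rfl

theorem eq_and_eq_of_rematchAt_eq (hC : IsSaturatedCycle M μ w e) {i i' j j' : ZMod n}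
    (hj : μ (e j) ≠ e (j + 1)) (hj' : μ (e j') ≠ e (j' + 1))
    (hi : i = j ∨ i = j + 1) (hi' : i' = j' ∨ i' = j' + 1)
    (h : rematchAt μ (e i) (w (j + 1)) = rematchAt μ (e i') (w (j' + 1))) : i = i' ∧ j = j' := by
  have hii' : i = i' := by
    rcases hC.rematchAt_eq_or_not_mem_range hj hi with hx | hx <;>
      rcases hC.rematchAt_eq_or_not_mem_range hj' hi' with hy | hy
    · exact hC.edge_injective (hx.symm.trans (h.trans hy))
    · exact absurd ⟨i, by rw [← hx, h]⟩ hy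
    · exact absurd ⟨i', by rw [← hy, h]⟩ hx
    · have hx' := (rematchAt_eq_or _ _).resolve_left fun h' => hx ⟨i, h'.symm⟩
      have hy' := (rematchAt_eq_or _ _).resolve_left fun h' => hy ⟨i', h'.symm⟩
      have := congrArg μ (hx'.symm.trans (h.trans hy'))
      rwa [hC.partner_partner, hC.partner_partner, hC.edge_injective.eq_iff] at this
  subst hii'
  refine ⟨rfl, by_contra fun hjj => ?_⟩
  exact rematchAt_ne_rematchAt hC.adj_partner (hC.edge_mem_verts i)
    (hC.injective.ne fun h => hjj (add_right_cancel h)) (hC.mem_edge_of_eq_or_eq hi)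
    (hC.mem_edge_of_eq_or_eq hi') h

theorem lineGraph_adj_rematchAt (hC : IsSaturatedCycle M μ w e) {j : ZMod n}
    (hj : μ (e j) ≠ e (j + 1)) :
    H.lineGraph.Adj (rematchAt μ (e j) (w (j + 1))) (rematchAt μ (e (j + 1)) (w (j + 1))) :=
  lineGraph_adj_iff_exists.mpr
    ⟨fun h => hC.add_one_ne j (hC.eq_and_eq_of_rematchAt_eq hj hj (.inl rfl) (.inr rfl) h).1.symm,
      w (j + 1), mem_rematchAt (hC.mem_edge_of_eq_or_eq (.inl rfl)),
      mem_rematchAt (hC.mem_edge_of_eq_or_eq (.inr rfl))⟩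

theorem exists_partner_ne (hC : IsSaturatedCycle M μ w e) : ∃ j, μ (e j) ≠ e (j + 1) := by
  by_contra! h
  have h0 := h 0
  rw [zero_add] at h0
  have h02 : e 0 = e (1 + 1) := by rw [← h 1, ← h0, hC.partner_partner]
  exact hC.two_ne_zero (by linear_combination -hC.edge_injective h02)

theorem rematchAt_mem_rematchedSet (hC : IsSaturatedCycle M μ w e) {i : ZMod n} {v : V}
    (hv : v ∈ (e i : Sym2 V)) (hfree : v ∈ (μ (e i) : Sym2 V) → μ (e i) ∉ Set.range e) :
    rematchAt μ (e i) v ∈ rematchedSet μ w e := by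
  rw [hC.coe_edge, Sym2.mem_iff] at hv
  rcases hv with rfl | rfl
  · refine ⟨i - 1, fun hj => ?_, .inr (by rw [sub_add_cancel])⟩
    rw [sub_add_cancel] at hj
    have hμi : μ (e i) = e (i - 1) := by rw [← hj, hC.partner_partner]
    exact hfree (by rw [hμi, hC.mem_edge_iff, sub_add_cancel]; exact .inr rfl) ⟨i - 1, hμi.symm⟩
  · exact ⟨i, fun hj => hfree (by rw [hj]; exact hC.mem_edge_iff.2 (.inl rfl)) ⟨i + 1, hj.symm⟩,
      .inl rfl⟩

theorem edge_mem_rematchedSet (hC : IsSaturatedCycle M μ w e) (i : ZMod n) :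
    e i ∈ rematchedSet μ w e := by
  have hne : w (i + 1) ≠ w i := hC.injective.ne (hC.add_one_ne i)
  have hi : w i ∈ (e i : Sym2 V) := hC.mem_edge_iff.2 (.inl rfl)
  have hi₁ : w (i + 1) ∈ (e i : Sym2 V) := hC.mem_edge_iff.2 (.inr rfl)
  obtain ⟨v, hv, hvμ⟩ : ∃ v ∈ (e i : Sym2 V), v ∉ (μ (e i) : Sym2 V) := by
    by_cases h : w (i + 1) ∈ (μ (e i) : Sym2 V)
    · exact ⟨w i, hi, not_mem_partner_of_mem_partner hC.adj_partner (hC.edge_mem_verts i)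
        hne hi₁ hi h⟩
    · exact ⟨w (i + 1), hi₁, h⟩
  rw [← rematchAt_of_not_mem hvμ]
  exact hC.rematchAt_mem_rematchedSet hv (absurd · hvμ)

theorem partner_mem_rematchedSet (hC : IsSaturatedCycle M μ w e) (i : ZMod n) :
    μ (e i) ∈ rematchedSet μ w e := by
  by_cases hr : μ (e i) ∈ Set.range e
  · obtain ⟨k, hk⟩ := hr
    rw [← hk]
    exact hC.edge_mem_rematchedSet k
  · obtain ⟨v, hv, hvμ⟩ := exists_mem_partner hC.adj_partner (hC.edge_mem_verts i)
    rw [← rematchAt_of_mem hvμ]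
    exact hC.rematchAt_mem_rematchedSet hv fun _ => hr

theorem rematchedSet_subset_verts (hC : IsSaturatedCycle M μ w e) :
    rematchedSet μ w e ⊆ M.verts := by
  rintro x ⟨j, -, rfl | rfl⟩ <;> exact rematchAt_mem_verts hC.adj_partner (hC.edge_mem_verts _) _

theorem mem_rematchedSet_of_adj (hC : IsSaturatedCycle M μ w e) {x y : H.edgeSet}
    (hxy : M.Adj x y) (hx : x ∈ rematchedSet μ w e) : y ∈ rematchedSet μ w e := by
  obtain ⟨i, rfl | rfl⟩ : ∃ i, x = e i ∨ x = μ (e i) := by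
    obtain ⟨j, -, rfl | rfl⟩ := hx
    exacts [⟨j, rematchAt_eq_or _ _⟩, ⟨j + 1, rematchAt_eq_or _ _⟩]
  · rw [eq_partner_of_adj hC.isMatching hC.adj_partner hxy]
    exact hC.partner_mem_rematchedSet i
  · rw [eq_partner_of_adj hC.isMatching hC.adj_partner hxy, hC.partner_partner]
    exact hC.edge_mem_rematchedSet i

theorem exists_isMatching (hC : IsSaturatedCycle M μ w e) :
    ∃ N : H.lineGraph.Subgraph, N.IsMatching ∧ N.verts = rematchedSet μ w e ∧
      ∀ j, μ (e j) ≠ e (j + 1) →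
        N.Adj (rematchAt μ (e j) (w (j + 1))) (rematchAt μ (e (j + 1)) (w (j + 1))) := by
  refine ⟨⨆ j : {j // μ (e j) ≠ e (j + 1)},
    H.lineGraph.subgraphOfAdj (hC.lineGraph_adj_rematchAt j.2), ?_, ?_, ?_⟩
  · refine Subgraph.IsMatching.iSup (fun _ => .subgraphOfAdj _) ?_
    rintro ⟨j, hj⟩ ⟨k, hk⟩ hjk
    rw [(Subgraph.IsMatching.subgraphOfAdj _).support_eq_verts,
      (Subgraph.IsMatching.subgraphOfAdj _).support_eq_verts, subgraphOfAdj_verts,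
      subgraphOfAdj_verts, Set.disjoint_left]
    rintro x (rfl | rfl) hx <;> rcases hx with h | h <;>
      exact hjk (Subtype.ext (hC.eq_and_eq_of_rematchAt_eq hj hk (by simp) (by simp) h).2)
  · ext x
    simp [rematchedSet]
  · intro j hj
    exact Subgraph.iSup_adj.mpr ⟨⟨j, hj⟩, by simp⟩

theorem not_isUniquelyRestricted (hC : IsSaturatedCycle M μ w e) : ¬IsUniquelyRestricted M := by
  intro hM
  obtain ⟨j, hj⟩ := hC.exists_partner_ne
  obtain ⟨N, hN, hNverts, hNadj⟩ := hC.exists_isMatching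
  have hadj := hM.adj_of_isMatching hN (hNverts ▸ hC.rematchedSet_subset_verts)
    (fun _ _ hxy hx => hNverts ▸ hC.mem_rematchedSet_of_adj hxy (hNverts ▸ hx)) (hNadj j hj)
  rcases eq_or_eq_partner_of_adj hC.isMatching hC.adj_partner (hC.edge_mem_verts j)
    (hC.edge_mem_verts (j + 1)) (rematchAt_eq_or _ _) (rematchAt_eq_or _ _) hadj with h | h
  · exact hC.add_one_ne j (hC.edge_injective h)
  · exact hj h.symm

end IsSaturatedCycle

end SaturatedCycle

theorem two_ne_zero_of_three_le {n : ℕ} (hn : 3 ≤ n) : (2 : ZMod n) ≠ 0 := by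
  rw [← Nat.cast_ofNat, Ne, ZMod.natCast_eq_zero_iff]
  exact fun h => absurd (Nat.le_of_dvd two_pos h) (by omega)

theorem edgeInduced_adj {H : SimpleGraph V} {E' : Set (Sym2 V)} {v v' : V} :
    (edgeInduced H E').Adj v v' ↔ s(v, v') ∈ E' ∧ H.Adj v v' :=
  Iff.rfl

/-- if `M` is a uniquely restricted matching of the line graph `L(H)`, then the
edge-induced subgraph of `H` on the edges corresponding to the `M`-saturated vertices of
`L(H)` is a forest. -/
theorem urm_line_graph_forest (H : SimpleGraph V) (M : (H.lineGraph).Subgraph)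
    (hM : IsUniquelyRestricted M) :
    ((edgeInduced H (Subtype.val '' M.verts)).coe).IsAcyclic := by
  intro u p hp
  have hn := hp.three_le_length
  obtain ⟨f⟩ := (cycleGraph_isContained_iff hn).mpr ⟨u, p, hp, rfl⟩
  have : NeZero p.length := ⟨by omega⟩
  let g := (ZMod.finEquiv p.length).symm
  have hadj (i : ZMod p.length) :
      s((f (g i) : V), f (g (i + 1))) ∈ Subtype.val '' M.verts ∧ H.Adj (f (g i)) (f (g (i + 1))) :=
    edgeInduced_adj.mp <| f.toHom.map_adj <| cycleGraph_adj'.mpr <| .inr <| by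
      rw [map_add, map_one, add_sub_cancel_left, Fin.val_one', Nat.mod_eq_of_lt (by omega)]
  choose! μ hμ using fun x (hx : x ∈ M.verts) => (hM.1 hx).exists
  refine IsSaturatedCycle.not_isUniquelyRestricted (w := fun i => (f (g i)).val)
    (e := fun i => ⟨_, (hadj i).2⟩) ⟨hM.1, hμ, two_ne_zero_of_three_le hn,
      Subtype.val_injective.comp (f.injective.comp g.injective), fun _ => rfl, fun i => ?_⟩ hM
  obtain ⟨x, hx, hxe⟩ := (hadj i).1
  rwa [show (⟨_, (hadj i).2⟩ : H.edgeSet) = x from Subtype.ext hxe.symm]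

end URM
end

section
/- Let H be a simple graph and let M be a matching in the line graph L(H). Each edge of M joins two adjacent edges of H and hence corresponds to a path of length 2 in H. If two distinct edges of M correspond to paths of length 2 in H having the same middle vertex, then M is not a uniquely restricted matching of L(H). -/
/-!
The four edges of `H` through `v` are pairwise adjacent in `L(H)`, so `e₁ f₁ f₂ e₂` is an
`M`-alternating cycle of length four. Replacing the `M`-edges `e₁f₁`, `e₂f₂` by `e₁e₂`, `f₁f₂`
gives a second perfect matching of `L(H)[V_M]`.
-/

namespace URM

open SimpleGraph

variable {V : Type*}

section Swap

variable {W : Type*} {G : SimpleGraph W} {M : G.Subgraph} {a b c d : W}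

theorem _root_.SimpleGraph.Subgraph.IsMatching.ne_of_adj_of_sym2_ne (hM : M.IsMatching)
    (hab : M.Adj a b) (hcd : M.Adj c d) (hne : s(a, b) ≠ s(c, d)) : a ≠ c := by
  rintro rfl
  exact hne (by rw [hM.eq_of_adj_left hab hcd])

theorem _root_.SimpleGraph.Subgraph.IsMatching.deleteVerts {s : Set W} (hM : M.IsMatching)
    (hs : ∀ ⦃x y⦄, M.Adj x y → y ∈ s → x ∈ s) : (M.deleteVerts s).IsMatching := by
  rintro x ⟨hxM, hxs⟩
  obtain ⟨y, hxy, huniq⟩ := hM hxM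
  refine ⟨y, Subgraph.deleteVerts_adj.mpr ⟨hxM, hxs, M.edge_vert hxy.symm, ?_, hxy⟩, ?_⟩
  · exact fun hys => hxs (hs hxy hys)
  · exact fun z hxz => huniq z (Subgraph.deleteVerts_adj.mp hxz).2.2.2.2

def swapSquare (M : G.Subgraph) (hac : G.Adj a c) (hbd : G.Adj b d) : G.Subgraph :=
  M.deleteVerts {a, b, c, d} ⊔ G.subgraphOfAdj hac ⊔ G.subgraphOfAdj hbd

theorem swapSquare_adj (hac : G.Adj a c) (hbd : G.Adj b d) : (swapSquare M hac hbd).Adj a c :=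
  Subgraph.sup_adj.mpr <| .inl <| Subgraph.sup_adj.mpr <| .inr <| subgraphOfAdj_adj_self hac

theorem verts_swapSquare (hab : M.Adj a b) (hcd : M.Adj c d) (hac : G.Adj a c)
    (hbd : G.Adj b d) : (swapSquare M hac hbd).verts = M.verts := by
  have ha := M.edge_vert hab
  have hb := M.edge_vert hab.symm
  have hc := M.edge_vert hcd
  have hd := M.edge_vert hcd.symm
  ext x
  simp only [swapSquare, Subgraph.verts_sup, Subgraph.deleteVerts_verts, subgraphOfAdj_verts,
    Set.mem_union, Set.mem_sdiff, Set.mem_insert_iff, Set.mem_singleton_iff]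
  grind

theorem isMatching_swapSquare (hM : M.IsMatching) (hab : M.Adj a b) (hcd : M.Adj c d)
    (hne : s(a, b) ≠ s(c, d)) (hac : G.Adj a c) (hbd : G.Adj b d) :
    (swapSquare M hac hbd).IsMatching := by
  have ha_ne_d : a ≠ d := hM.ne_of_adj_of_sym2_ne hab hcd.symm (by rwa [Sym2.eq_swap (a := d)])
  have hb_ne_c : b ≠ c := hM.ne_of_adj_of_sym2_ne hab.symm hcd (by rwa [Sym2.eq_swap])
  have ha_ne_b : a ≠ b := (M.adj_sub hab).ne
  have hc_ne_d : c ≠ d := (M.adj_sub hcd).ne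
  have hs : ∀ ⦃x y⦄, M.Adj x y → y ∈ ({a, b, c, d} : Set W) → x ∈ ({a, b, c, d} : Set W) := by
    rintro x y hxy (rfl | rfl | rfl | rfl)
    · simp [hM.eq_of_adj_right hxy hab.symm]
    · simp [hM.eq_of_adj_right hxy hab]
    · simp [hM.eq_of_adj_right hxy hcd.symm]
    · simp [hM.eq_of_adj_right hxy hcd]
  refine ((hM.deleteVerts hs).sup (.subgraphOfAdj hac) ?_).sup (.subgraphOfAdj hbd) ?_ <;>
  · refine Disjoint.mono (Subgraph.support_subset_verts _) (Subgraph.support_subset_verts _) ?_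
    simp only [Subgraph.verts_sup, Subgraph.deleteVerts_verts, subgraphOfAdj_verts,
      Set.disjoint_left, Set.mem_union, Set.mem_sdiff, Set.mem_insert_iff, Set.mem_singleton_iff]
    grind

theorem not_isUniquelyRestricted_of_alternating_square (hab : M.Adj a b) (hcd : M.Adj c d)
    (hne : s(a, b) ≠ s(c, d)) (hac : G.Adj a c) (hbd : G.Adj b d) :
    ¬ IsUniquelyRestricted M := by
  rintro ⟨hM, huniq⟩
  have hswap : swapSquare M hac hbd = M :=
    huniq _ (verts_swapSquare hab hcd hac hbd) (isMatching_swapSquare hM hab hcd hne hac hbd)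
  have hbc : b = c := hM.eq_of_adj_left hab (hswap ▸ swapSquare_adj hac hbd)
  exact hM.ne_of_adj_of_sym2_ne hab.symm hcd (by rwa [Sym2.eq_swap]) hbc

end Swap

theorem not_urm_of_same_middle_vertex_general (H : SimpleGraph V) (M : (H.lineGraph).Subgraph)
    (e₁ f₁ e₂ f₂ : H.edgeSet)
    (h₁ : M.Adj e₁ f₁) (h₂ : M.Adj e₂ f₂)
    (hne : s(e₁, f₁) ≠ s(e₂, f₂)) (v : V)
    (hv₁ : v ∈ (e₁ : Sym2 V)) (hv₂ : v ∈ (f₁ : Sym2 V))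
    (hv₃ : v ∈ (e₂ : Sym2 V)) (hv₄ : v ∈ (f₂ : Sym2 V)) :
    ¬ IsUniquelyRestricted M := by
  intro hU
  have he : e₁ ≠ e₂ := hU.1.ne_of_adj_of_sym2_ne h₁ h₂ hne
  have hf : f₁ ≠ f₂ := hU.1.ne_of_adj_of_sym2_ne h₁.symm h₂.symm <| by
    rwa [Sym2.eq_swap, Sym2.eq_swap (a := f₂)]
  exact not_isUniquelyRestricted_of_alternating_square h₁ h₂ hne
    (lineGraph_adj_iff_exists.mpr ⟨he, v, hv₁, hv₃⟩)
    (lineGraph_adj_iff_exists.mpr ⟨hf, v, hv₂, hv₄⟩) hU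

/-- if two distinct edges of a matching `M` in `L(H)` correspond to paths of
length 2 in `H` having the same middle vertex `v`, then `M` is not uniquely restricted. -/
theorem not_urm_of_same_middle_vertex (H : SimpleGraph V) (M : (H.lineGraph).Subgraph)
    (hM : M.IsMatching) (e₁ f₁ e₂ f₂ : H.edgeSet)
    (h₁ : M.Adj e₁ f₁) (h₂ : M.Adj e₂ f₂)
    (hne : s(e₁, f₁) ≠ s(e₂, f₂)) (v : V)
    (hv₁ : v ∈ (e₁ : Sym2 V)) (hv₂ : v ∈ (f₁ : Sym2 V))
    (hv₃ : v ∈ (e₂ : Sym2 V)) (hv₄ : v ∈ (f₂ : Sym2 V)) :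
    ¬ IsUniquelyRestricted M :=
  not_urm_of_same_middle_vertex_general H M e₁ f₁ e₂ f₂ h₁ h₂ hne v hv₁ hv₂ hv₃ hv₄

end URM
end

section
/- Let F be a forest whose edge set can be partitioned into paths of length 2 whose middle vertices are pairwise distinct (equivalently, no two of the paths together form an edge-induced subgraph isomorphic to K_{1,4}). Then no vertex of F has three or more neighbors of degree 1 in F. -/
namespace URM

open SimpleGraph

variable {V : Type*}

/-! A leaf cannot be the middle vertex of a path of length 2, so every leaf adjacent to `v` is an
end of a path whose middle vertex is `v`. Middle vertices being distinct, there is only one such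
path, and it has only two ends. -/

theorem IsPath2.not_isLeaf_middle {H : SimpleGraph V} {x y z : V} (h : IsPath2 H x y z) :
    ¬ IsLeaf H y := by
  rintro ⟨w, -, huniq⟩
  exact h.2.2 ((huniq x h.1.symm).trans (huniq z h.2.1).symm)

theorem eq_middle_of_mem_path2Edges {x y z v u : V} (h : s(v, u) ∈ path2Edges x y z)
    (hu : u ≠ y) : v = y ∧ (u = x ∨ u = z) := by
  simp only [path2Edges, Set.mem_insert_iff, Set.mem_singleton_iff, Sym2.eq_iff] at h
  tauto

theorem exists_eq_middle_of_adj_isLeaf {ι : Type*} {F : SimpleGraph V} {a b c : ι → V}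
    (hP : ∀ i, IsPath2 F (a i) (b i) (c i))
    (hE : F.edgeSet = ⋃ i, path2Edges (a i) (b i) (c i)) {v u : V} (hvu : F.Adj v u)
    (hu : IsLeaf F u) : ∃ i, v = b i ∧ (u = a i ∨ u = c i) := by
  have he : s(v, u) ∈ F.edgeSet := hvu
  rw [hE, Set.mem_iUnion] at he
  obtain ⟨i, hi⟩ := he
  refine ⟨i, eq_middle_of_mem_path2Edges hi ?_⟩
  rintro rfl
  exact (hP i).not_isLeaf_middle hu

theorem no_three_leaf_neighbors_general {ι : Type*} (F : SimpleGraph V)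
    (a b c : ι → V)
    (hP : ∀ i, IsPath2 F (a i) (b i) (c i))
    (hmid : ∀ i j, i ≠ j → b i ≠ b j)
    (hE : F.edgeSet = ⋃ i, path2Edges (a i) (b i) (c i)) :
    ∀ v u₁ u₂ u₃ : V, F.Adj v u₁ → F.Adj v u₂ → F.Adj v u₃ →
      IsLeaf F u₁ → IsLeaf F u₂ → IsLeaf F u₃ →
      u₁ = u₂ ∨ u₁ = u₃ ∨ u₂ = u₃ := by
  intro v u₁ u₂ u₃ h₁ h₂ h₃ l₁ l₂ l₃
  have hb : Function.Injective b := fun i j h => not_imp_not.mp (hmid i j) h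
  obtain ⟨i, rfl, hu₁⟩ := exists_eq_middle_of_adj_isLeaf hP hE h₁ l₁
  obtain ⟨j, hj, hu₂⟩ := exists_eq_middle_of_adj_isLeaf hP hE h₂ l₂
  obtain ⟨k, hk, hu₃⟩ := exists_eq_middle_of_adj_isLeaf hP hE h₃ l₃
  obtain rfl := hb hj
  obtain rfl := hb hk
  rcases hu₁ with rfl | rfl <;> rcases hu₂ with rfl | rfl <;> rcases hu₃ with rfl | rfl <;> simp

/-- if the edge set of a forest `F` is partitioned into paths of length 2 whose
middle vertices are pairwise distinct, then no vertex of `F` has three or more neighbors of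
degree 1. -/
theorem no_three_leaf_neighbors {ι : Type*} (F : SimpleGraph V) (hF : F.IsAcyclic)
    (a b c : ι → V)
    (hP : ∀ i, IsPath2 F (a i) (b i) (c i))
    (hdisj : ∀ i j, i ≠ j →
      Disjoint (path2Edges (a i) (b i) (c i)) (path2Edges (a j) (b j) (c j)))
    (hmid : ∀ i j, i ≠ j → b i ≠ b j)
    (hE : F.edgeSet = ⋃ i, path2Edges (a i) (b i) (c i)) :
    ∀ v u₁ u₂ u₃ : V, F.Adj v u₁ → F.Adj v u₂ → F.Adj v u₃ →
      IsLeaf F u₁ → IsLeaf F u₂ → IsLeaf F u₃ →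
      u₁ = u₂ ∨ u₁ = u₃ ∨ u₂ = u₃ :=
  no_three_leaf_neighbors_general F a b c hP hmid hE

end URM
end

section
/- Let X be a finite set with |X| = N ≥ 1, and let Y be a collection of subsets of X such that any two distinct members of Y are incomparable (neither is a subset of the other). Then |Y| ≤ 2^N / √N. -/
/-! By Sperner's theorem an antichain has at most `C(N, ⌊N/2⌋)` members, so it suffices that
`N * C(N, ⌊N/2⌋)² ≤ 4^N`. For even `N = 2m` this follows from `(2m+1) * C(2m, m)² ≤ 16^m`, which
is an induction on `m` using `(m+1) C(2m+2, m+1) = 2(2m+1) C(2m, m)` and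
`(2m+1)(2m+3) ≤ (2m+2)²`; for odd `N = 2m+1` it follows from the same inequality since
`C(2m+1, m) ≤ 2 C(2m, m)`. -/

namespace URM

open SimpleGraph

variable {V : Type*}

theorem _root_.Nat.two_mul_add_one_mul_centralBinom_sq_le (n : ℕ) :
    (2 * n + 1) * n.centralBinom ^ 2 ≤ 16 ^ n := by
  induction n with
  | zero => simp
  | succ n ih =>
    refine Nat.le_of_mul_le_mul_left (c := (n + 1) ^ 2) ?_ (pow_pos n.succ_pos 2)
    calc (n + 1) ^ 2 * ((2 * (n + 1) + 1) * (n + 1).centralBinom ^ 2)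
        = (2 * n + 3) * ((n + 1) * (n + 1).centralBinom) ^ 2 := by ring
      _ = 4 * ((2 * n + 1) * (2 * n + 3)) * ((2 * n + 1) * n.centralBinom ^ 2) := by
        rw [Nat.succ_mul_centralBinom_succ]; ring
      _ ≤ 4 * (2 * n + 2) ^ 2 * 16 ^ n := by gcongr; nlinarith
      _ = (n + 1) ^ 2 * 16 ^ (n + 1) := by ring

theorem _root_.Nat.choose_two_mul_add_one_le_two_mul_centralBinom (n : ℕ) :
    (2 * n + 1).choose n ≤ 2 * n.centralBinom := by
  rw [← Nat.choose_symm_half, Nat.choose_succ_succ', two_mul n.centralBinom]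
  exact add_le_add (Nat.choose_le_centralBinom _ _) (Nat.choose_le_centralBinom _ _)

theorem _root_.Nat.mul_choose_half_sq_le_four_pow (n : ℕ) :
    n * n.choose (n / 2) ^ 2 ≤ 4 ^ n := by
  obtain ⟨m, rfl | rfl⟩ := Nat.even_or_odd' n
  · rw [Nat.mul_div_cancel_left m two_pos, ← Nat.centralBinom_eq_two_mul_choose, pow_mul]
    calc 2 * m * m.centralBinom ^ 2 ≤ (2 * m + 1) * m.centralBinom ^ 2 := by gcongr; omega
      _ ≤ 16 ^ m := Nat.two_mul_add_one_mul_centralBinom_sq_le m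
  · rw [show (2 * m + 1) / 2 = m by omega]
    calc (2 * m + 1) * (2 * m + 1).choose m ^ 2
        ≤ (2 * m + 1) * (2 * m.centralBinom) ^ 2 := by
          gcongr; exact Nat.choose_two_mul_add_one_le_two_mul_centralBinom m
      _ = 4 * ((2 * m + 1) * m.centralBinom ^ 2) := by ring
      _ ≤ 4 * 16 ^ m := by gcongr; exact Nat.two_mul_add_one_mul_centralBinom_sq_le m
      _ = 4 ^ (2 * m + 1) := by rw [pow_succ, pow_mul]; ring

theorem _root_.Nat.choose_half_le_two_pow_div_sqrt {n : ℕ} (hn : n ≠ 0) :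
    (n.choose (n / 2) : ℝ) ≤ 2 ^ n / √n := by
  have hsqrt : 0 < √(n : ℝ) := Real.sqrt_pos.mpr (by positivity)
  rw [le_div_iff₀ hsqrt]
  refine le_of_sq_le_sq ?_ (by positivity)
  calc (n.choose (n / 2) * √n : ℝ) ^ 2 = n * n.choose (n / 2) ^ 2 := by
        rw [mul_pow, Real.sq_sqrt n.cast_nonneg, mul_comm]
    _ ≤ 4 ^ n := by exact_mod_cast Nat.mul_choose_half_sq_le_four_pow n
    _ = (2 ^ n) ^ 2 := by rw [← pow_mul, mul_comm, pow_mul]; norm_num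

theorem _root_.IsAntichain.card_le_choose_half_of_forall_subset {α : Type*}
    {𝒜 : Finset (Finset α)} {X : Finset α} (h𝒜 : IsAntichain (· ⊆ ·) (𝒜 : Set (Finset α)))
    (hX : ∀ A ∈ 𝒜, A ⊆ X) : 𝒜.card ≤ X.card.choose (X.card / 2) := by
  classical
  set restrict : Finset α → Finset X := fun A => A.subtype (· ∈ X)
  have hmap : ∀ A ∈ 𝒜, (restrict A).map (Function.Embedding.subtype _) = A :=
    fun A hA => Finset.subtype_map_of_mem (hX A hA)
  have hsub : ∀ A ∈ 𝒜, ∀ B ∈ 𝒜, restrict A ⊆ restrict B → A ⊆ B := fun A hA B hB h => by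
    simpa only [hmap A hA, hmap B hB] using
      (Finset.map_subset_map (f := Function.Embedding.subtype (· ∈ X))).mpr h
  have hinj : Set.InjOn restrict 𝒜 := fun A hA B hB h =>
    (hsub A hA B hB h.le).antisymm (hsub B hB A hA h.ge)
  have hanti : IsAntichain (· ⊆ ·) ((𝒜.image restrict : Finset (Finset X)) : Set (Finset X)) := by
    rw [Finset.coe_image]
    rintro _ ⟨A, hA, rfl⟩ _ ⟨B, hB, rfl⟩ hAB h
    exact h𝒜 hA hB (ne_of_apply_ne restrict hAB) (hsub A hA B hB h)
  simpa [Finset.card_image_of_injOn hinj] using hanti.sperner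

/-- an antichain of subsets of an `N`-element set (`N ≥ 1`) has at most
`2^N / √N` members. -/
theorem antichain_card_le {α : Type*} (X : Finset α) (N : ℕ) (hN : 1 ≤ N)
    (hX : X.card = N) (Y : Finset (Finset α)) (hYX : ∀ A ∈ Y, A ⊆ X)
    (hY : ∀ A ∈ Y, ∀ B ∈ Y, A ≠ B → ¬ A ⊆ B ∧ ¬ B ⊆ A) :
    (Y.card : ℝ) ≤ 2 ^ N / Real.sqrt N := by
  have hanti : IsAntichain (· ⊆ ·) (Y : Set (Finset α)) :=
    fun A hA B hB hAB => (hY A hA B hB hAB).1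
  calc (Y.card : ℝ) ≤ N.choose (N / 2) := by
        exact_mod_cast hX ▸ hanti.card_le_choose_half_of_forall_subset hYX
    _ ≤ 2 ^ N / Real.sqrt N := Nat.choose_half_le_two_pow_div_sqrt (by omega)

end URM
end

section
/- Let G be a finite simple graph with a vertex cover X of size t ≥ 1, and let I = V(G) \ X (so I is an independent set). Suppose that for every two distinct vertices u, v ∈ I, neither N(u) ⊆ N(v) nor N(v) ⊆ N(u), where N(w) denotes the neighborhood of w in G. Then |I| ≤ 2^t / √t, and consequently |V(G)| ≤ t + 2^t / √t. -/
/-!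
Every vertex outside the vertex cover `X` has its neighbourhood inside `X`, so the vertices of
`Xᶜ` give pairwise incomparable subsets of `X`. By Sperner's theorem there are at most
`t.choose (t / 2)` of them, and `t.choose (t / 2) ≤ 2 ^ t / √t` follows from the estimate
`centralBinom n ^ 2 * (3 * n + 1) ≤ 16 ^ n`.
-/

namespace URM

open SimpleGraph

variable {V : Type*}

-- The weaker `centralBinom n ^ 2 * n ≤ 4 ^ (2 * n)` does not survive the induction step;
-- the factor `3 * n + 1` does.
theorem _root_.Nat.centralBinom_sq_mul_le (n : ℕ) :
    n.centralBinom ^ 2 * (3 * n + 1) ≤ 16 ^ n := by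
  induction n with
  | zero => simp
  | succ n ih =>
    have hrec := Nat.succ_mul_centralBinom_succ n
    have hstep : (2 * (2 * n + 1)) ^ 2 * (3 * (n + 1) + 1) ≤ 16 * (n + 1) ^ 2 * (3 * n + 1) := by
      nlinarith
    refine Nat.le_of_mul_le_mul_left ?_ (by positivity : 0 < (n + 1) ^ 2)
    calc (n + 1) ^ 2 * ((n + 1).centralBinom ^ 2 * (3 * (n + 1) + 1))
        = (2 * (2 * n + 1)) ^ 2 * (3 * (n + 1) + 1) * n.centralBinom ^ 2 := by
          rw [← mul_assoc, ← mul_pow, hrec]; ring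
      _ ≤ 16 * (n + 1) ^ 2 * (3 * n + 1) * n.centralBinom ^ 2 := by gcongr
      _ = 16 * (n + 1) ^ 2 * (n.centralBinom ^ 2 * (3 * n + 1)) := by ring
      _ ≤ 16 * (n + 1) ^ 2 * 16 ^ n := by gcongr
      _ = (n + 1) ^ 2 * 16 ^ (n + 1) := by ring

theorem _root_.Nat.two_mul_choose_middle (n : ℕ) :
    2 * (2 * n + 1).choose n = (n + 1).centralBinom := by
  rw [Nat.centralBinom_eq_two_mul_choose, show 2 * (n + 1) = 2 * n + 1 + 1 by ring,
    Nat.choose_succ_succ, Nat.choose_symm_half]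
  ring

theorem _root_.Nat.choose_half_sq_mul_le (t : ℕ) : t.choose (t / 2) ^ 2 * t ≤ 4 ^ t := by
  obtain ⟨n, rfl | rfl⟩ := Nat.even_or_odd' t
  · rw [Nat.mul_div_cancel_left n two_pos, ← Nat.centralBinom_eq_two_mul_choose]
    calc n.centralBinom ^ 2 * (2 * n) ≤ n.centralBinom ^ 2 * (3 * n + 1) := by gcongr; omega
      _ ≤ 16 ^ n := n.centralBinom_sq_mul_le
      _ = 4 ^ (2 * n) := by rw [pow_mul]; norm_num
  · rw [show (2 * n + 1) / 2 = n by omega]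
    refine Nat.le_of_mul_le_mul_left ?_ (by norm_num : 0 < 4)
    calc 4 * ((2 * n + 1).choose n ^ 2 * (2 * n + 1))
        = (n + 1).centralBinom ^ 2 * (2 * n + 1) := by rw [← Nat.two_mul_choose_middle]; ring
      _ ≤ (n + 1).centralBinom ^ 2 * (3 * (n + 1) + 1) := Nat.mul_le_mul_left _ (by omega)
      _ ≤ 16 ^ (n + 1) := (n + 1).centralBinom_sq_mul_le
      _ = 4 * 4 ^ (2 * n + 1) := by rw [pow_succ, pow_succ, pow_mul]; norm_num; ring

theorem _root_.Nat.choose_half_le_two_pow_div_sqrt_s12 {t : ℕ} (ht : t ≠ 0) :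
    (t.choose (t / 2) : ℝ) ≤ 2 ^ t / √t := by
  rw [le_div_iff₀ (by positivity), ← Real.sqrt_sq (by positivity : (0 : ℝ) ≤ 2 ^ t),
    ← Real.sqrt_sq (by positivity : (0 : ℝ) ≤ t.choose (t / 2)),
    ← Real.sqrt_mul (by positivity)]
  gcongr
  rw [← pow_mul, mul_comm t, pow_mul]
  exact_mod_cast t.choose_half_sq_mul_le

open Finset in
theorem _root_.Set.ncard_le_choose_half_of_subset_imp_eq {α β : Type*} [Fintype β] {s : Set α}
    (hs : s.Finite) (f : α → Finset β) (hf : ∀ a ∈ s, ∀ b ∈ s, f a ⊆ f b → a = b) :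
    s.ncard ≤ (Fintype.card β).choose (Fintype.card β / 2) := by
  classical
  have hinj : Set.InjOn f s := fun a ha b hb hab => hf a ha b hb hab.le
  have hanti : IsAntichain (· ⊆ ·) (SetLike.coe (hs.toFinset.image f)) := by
    simp only [coe_image, Set.Finite.coe_toFinset]
    rintro _ ⟨a, ha, rfl⟩ _ ⟨b, hb, rfl⟩ hne hab
    exact hne (congrArg f (hf a ha b hb hab))
  calc s.ncard = #(hs.toFinset.image f) := by
        rw [card_image_of_injOn (by simpa using hinj), Set.ncard_eq_toFinset_card s hs]
    _ ≤ _ := hanti.sperner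

theorem _root_.SimpleGraph.IsVertexCover.neighborSet_subset {G : SimpleGraph V} {X : Set V}
    (hX : G.IsVertexCover X) {u : V} (hu : u ∉ X) :
    G.neighborSet u ⊆ X :=
  fun _ huv => (hX huv).resolve_left hu

theorem _root_.SimpleGraph.IsVertexCover.ncard_compl_le_choose_half [Finite V] {G : SimpleGraph V}
    {X : Set V} (hX : G.IsVertexCover X)
    (hinc : ∀ u ∈ Xᶜ, ∀ v ∈ Xᶜ, G.neighborSet u ⊆ G.neighborSet v → u = v) :
    Xᶜ.ncard ≤ X.ncard.choose (X.ncard / 2) := by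
  classical
  have := Fintype.ofFinite V
  rw [← Nat.card_coe_set_eq X, Nat.card_eq_fintype_card]
  refine Set.ncard_le_choose_half_of_subset_imp_eq (Set.toFinite _)
    (fun u => {x : X | G.Adj u x}) fun u hu v hv hsub => hinc u hu v hv fun w huw => ?_
  have hw : w ∈ X := hX.neighborSet_subset hu huw
  simpa using hsub (by simpa using huw : (⟨w, hw⟩ : X) ∈ ({x : X | G.Adj u x} : Finset X))

/-- if `X` is a vertex cover of size `t ≥ 1` and the vertices outside `X` have
pairwise incomparable neighborhoods, then there are at most `2^t / √t` vertices outside `X`,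
and hence at most `t + 2^t / √t` vertices in all. -/
theorem independent_set_bound {V : Type*} [Fintype V] (G : SimpleGraph V) (X : Set V)
    (t : ℕ) (ht : 1 ≤ t) (hXcard : X.ncard = t)
    (hvc : ∀ ⦃u v : V⦄, G.Adj u v → u ∈ X ∨ v ∈ X)
    (hinc : ∀ u ∈ Xᶜ, ∀ v ∈ Xᶜ, u ≠ v →
      ¬ G.neighborSet u ⊆ G.neighborSet v ∧ ¬ G.neighborSet v ⊆ G.neighborSet u) :
    ((Xᶜ : Set V).ncard : ℝ) ≤ 2 ^ t / Real.sqrt t ∧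
      (Fintype.card V : ℝ) ≤ t + 2 ^ t / Real.sqrt t := by
  have hsperner : Xᶜ.ncard ≤ t.choose (t / 2) := hXcard ▸
    SimpleGraph.IsVertexCover.ncard_compl_le_choose_half hvc fun u hu v hv hsub =>
      by_contra fun hne => (hinc u hu v hv hne).1 hsub
  have hcompl : ((Xᶜ : Set V).ncard : ℝ) ≤ 2 ^ t / Real.sqrt t :=
    (Nat.cast_le.mpr hsperner).trans (Nat.choose_half_le_two_pow_div_sqrt_s12 (by omega))
  refine ⟨hcompl, ?_⟩
  have hsplit : Fintype.card V = t + Xᶜ.ncard := by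
    rw [← hXcard, Set.ncard_add_ncard_compl, Nat.card_eq_fintype_card]
  rw [hsplit, Nat.cast_add]
  linarith

end URM
end

section
/- Let H be a simple graph and let ℓ be a positive integer. Suppose H contains ℓ pairwise edge-disjoint paths W₁, …, W_ℓ, each of length 2, such that the union ⋃_{i∈[ℓ]} W_i is a forest and no two distinct paths W_i and W_j (i ≠ j) together form an edge-induced subgraph of H isomorphic to K_{1,4}. Then the line graph L(H) has a uniquely restricted matching of size ℓ, namely the matching whose i-th edge joins the two vertices of L(H) corresponding to the two edges of W_i. -/
/-!
A perfect matching `M'` of `L(H)[V_M]` decomposes the edges of the forest `F = ⋃ Wᵢ` into paths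
of length 2, just as `M` does. Orient every edge of `F` towards the middle vertex of its path. Two
of the `Wᵢ` with the same middle vertex would span a `K_{1,4}`, so the middles of the `Wᵢ` are
distinct, and a local exchange argument then shows that the edges which `M` and `M'` orient
differently form a subgraph of `F` without leaves. A finite forest with an edge has a leaf, so
`M` and `M'` orient every edge alike; since the middles of the `Wᵢ` are distinct, `M' = M`.
-/

namespace URM

open SimpleGraph

variable {V : Type*}

section Forest

variable {G : SimpleGraph V}

theorem exists_isLeaf_of_isAcyclic [Finite G.edgeSet] (hG : G.IsAcyclic) {u v : V}
    (huv : G.Adj u v) : ∃ x, IsLeaf G x := by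
  have : Nonempty V := ⟨u⟩
  obtain ⟨x, y, p, hp, hmax⟩ := Walk.exists_isPath_forall_isPath_length_le_length G
  have hnil : ¬ p.Nil := by
    intro h
    have := hmax u v (Walk.cons huv .nil) (by simp [huv.ne])
    simp [Walk.length_eq_zero_iff.mpr h] at this
  refine ⟨x, p.snd, p.adj_snd hnil, fun w hw => hG.eq_snd_of_adj_start hp hw ?_⟩
  by_contra hw'
  have := hmax w y (Walk.cons hw.symm p) (hp.cons hw')
  simp at this

end Forest

section Matching

variable {W : Type*} {G : SimpleGraph W} {M M' : G.Subgraph}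

theorem _root_.SimpleGraph.Subgraph.IsMatching.eq_of_adj_imp (hM : M.IsMatching)
    (hM' : M'.IsMatching) (hverts : M'.verts = M.verts)
    (hadj : ∀ ⦃v w⦄, M.Adj v w → M'.Adj v w) : M' = M := by
  refine Subgraph.ext hverts (funext₂ fun v w => propext ⟨fun h => ?_, fun h => hadj h⟩)
  obtain ⟨u, hu, -⟩ := hM (hverts ▸ h.fst_mem)
  rwa [hM'.eq_of_adj_left h (hadj hu)]

end Matching

section Middle

variable {H : SimpleGraph V}

def IsMiddle (M : H.lineGraph.Subgraph) (e : H.edgeSet) (v : V) : Prop :=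
  v ∈ (e : Sym2 V) ∧ ∃ f, M.Adj e f ∧ v ∈ (f : Sym2 V)

def HasDistinctMiddles (M : H.lineGraph.Subgraph) : Prop :=
  ∀ ⦃e g : H.edgeSet⦄ ⦃v : V⦄, IsMiddle M e v → IsMiddle M g v → e = g ∨ M.Adj e g

variable {M M' : H.lineGraph.Subgraph} {e f : H.edgeSet} {u v w : V}

theorem eq_of_mem_of_lineGraph_adj (hef : H.lineGraph.Adj e f) (hue : u ∈ (e : Sym2 V))
    (huf : u ∈ (f : Sym2 V)) (hve : v ∈ (e : Sym2 V)) (hvf : v ∈ (f : Sym2 V)) : u = v := by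
  by_contra huv
  have he : (e : Sym2 V) = s(u, v) := (Sym2.mem_and_mem_iff huv).mp ⟨hue, hve⟩
  have hf : (f : Sym2 V) = s(u, v) := (Sym2.mem_and_mem_iff huv).mp ⟨huf, hvf⟩
  exact hef.ne (Subtype.ext (he.trans hf.symm))

theorem exists_isMiddle (hM : M.IsMatching) (he : e ∈ M.verts) : ∃ v, IsMiddle M e v := by
  obtain ⟨f, hf, -⟩ := hM he
  obtain ⟨-, v, hve, hvf⟩ := lineGraph_adj_iff_exists.mp (M.adj_sub hf)
  exact ⟨v, hve, f, hf, hvf⟩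

theorem IsMiddle.mem_verts (hv : IsMiddle M e v) : e ∈ M.verts :=
  hv.2.choose_spec.1.fst_mem

theorem IsMiddle.eq (hM : M.IsMatching) (hu : IsMiddle M e u) (hv : IsMiddle M e v) :
    u = v := by
  obtain ⟨hue, f, hf, huf⟩ := hu
  obtain ⟨hve, f', hf', hvf'⟩ := hv
  rw [hM.eq_of_adj_left hf' hf] at hvf'
  exact eq_of_mem_of_lineGraph_adj (M.adj_sub hf) hue huf hve hvf'

theorem IsMiddle.of_adj (hM : M.IsMatching) (hv : IsMiddle M e v) (hef : M.Adj e f) :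
    IsMiddle M f v := by
  obtain ⟨hve, g, hg, hvg⟩ := hv
  exact ⟨hM.eq_of_adj_left hg hef ▸ hvg, e, hef.symm, hve⟩

theorem isMiddle_iff_not (hM : M.IsMatching) (he : e ∈ M.verts)
    (hvw : (e : Sym2 V) = s(v, w)) : IsMiddle M e v ↔ ¬ IsMiddle M e w := by
  refine ⟨fun hv hw => ?_, fun hw => ?_⟩
  · have hadj : H.Adj v w := by simpa [hvw] using e.2
    exact hadj.ne (hv.eq hM hw)
  · obtain ⟨m, hm⟩ := exists_isMiddle hM he
    have hme : m ∈ s(v, w) := hvw ▸ hm.1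
    rcases Sym2.mem_iff.mp hme with rfl | rfl
    · exact hm
    · exact absurd hm hw

theorem exists_ne_xor_of_isMiddle_of_not (hM : M.IsMatching) (hM' : M'.IsMatching)
    (hmid : HasDistinctMiddles M) (hB : IsMiddle M e v) (hnA : ¬ IsMiddle M' e v) :
    ∃ f ≠ e, Xor (IsMiddle M f v) (IsMiddle M' f v) := by
  obtain ⟨e', he', -⟩ := hB.2
  have hB' : IsMiddle M e' v := hB.of_adj hM he'
  by_cases hA' : IsMiddle M' e' v
  · obtain ⟨g, hg, -⟩ := hA'.2
    have hAg : IsMiddle M' g v := hA'.of_adj hM' hg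
    have hge : g ≠ e := fun h => hnA (h ▸ hAg)
    refine ⟨g, hge, .inr ⟨hAg, fun hBg => ?_⟩⟩
    rcases hmid hB hBg with h | h
    · exact hge h.symm
    · exact hg.ne (hM.eq_of_adj_left he' h)
  · exact ⟨e', he'.ne.symm, .inl ⟨hB', hA'⟩⟩

theorem exists_ne_xor_of_not_of_isMiddle (hM : M.IsMatching) (hM' : M'.IsMatching)
    (hmid : HasDistinctMiddles M) (hA : IsMiddle M' e v) (hnB : ¬ IsMiddle M e v) :
    ∃ f ≠ e, Xor (IsMiddle M f v) (IsMiddle M' f v) := by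
  obtain ⟨e', he', -⟩ := hA.2
  have hA' : IsMiddle M' e' v := hA.of_adj hM' he'
  by_cases hB' : IsMiddle M e' v
  · obtain ⟨g, hg, -⟩ := hB'.2
    have hBg : IsMiddle M g v := hB'.of_adj hM hg
    have hge : g ≠ e := fun h => hnB (h ▸ hBg)
    by_cases hAg : IsMiddle M' g v
    · obtain ⟨k, hk, -⟩ := hAg.2
      have hAk : IsMiddle M' k v := hAg.of_adj hM' hk
      refine ⟨k, ?_, .inr ⟨hAk, fun hBk => ?_⟩⟩
      · rintro rfl
        exact hg.ne (hM'.eq_of_adj_left he' hk.symm)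
      · rcases hmid hB' hBk with rfl | h
        · exact hge (hM'.eq_of_adj_right hk he')
        · exact hk.ne (hM.eq_of_adj_left hg h)
    · exact ⟨g, hge, .inl ⟨hBg, hAg⟩⟩
  · exact ⟨e', he'.ne.symm, .inr ⟨hA', hB'⟩⟩

theorem exists_ne_xor_isMiddle (hM : M.IsMatching) (hM' : M'.IsMatching)
    (hmid : HasDistinctMiddles M) (hx : Xor (IsMiddle M e v) (IsMiddle M' e v)) :
    ∃ f ≠ e, Xor (IsMiddle M f v) (IsMiddle M' f v) :=
  hx.elim (fun h => exists_ne_xor_of_isMiddle_of_not hM hM' hmid h.1 h.2)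
    (fun h => exists_ne_xor_of_not_of_isMiddle hM hM' hmid h.1 h.2)

end Middle

section Uniqueness

variable {H : SimpleGraph V} {M M' : H.lineGraph.Subgraph} {e : H.edgeSet} {u v w : V}

/-- Orienting each edge towards its middle, the edges that `M` and `M'` orient differently. -/
def middleDisagreement (M M' : H.lineGraph.Subgraph) : SimpleGraph V :=
  fromEdgeSet {s | ∃ e : H.edgeSet, (e : Sym2 V) = s ∧
    ∀ v ∈ s, Xor (IsMiddle M e v) (IsMiddle M' e v)}

theorem mem_verts_of_xor (hverts : M'.verts = M.verts)
    (hx : Xor (IsMiddle M e v) (IsMiddle M' e v)) : e ∈ M.verts :=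
  hx.or.elim IsMiddle.mem_verts fun h => hverts ▸ h.mem_verts

theorem middleDisagreement_adj_of_xor (hM : M.IsMatching) (hM' : M'.IsMatching)
    (hverts : M'.verts = M.verts) (hvw : (e : Sym2 V) = s(v, w))
    (hx : Xor (IsMiddle M e v) (IsMiddle M' e v)) : (middleDisagreement M M').Adj v w := by
  have hadj : H.Adj v w := by simpa [hvw] using e.2
  have he := mem_verts_of_xor hverts hx
  refine ⟨⟨e, hvw, fun x hx' => ?_⟩, hadj.ne⟩
  rcases Sym2.mem_iff.mp hx' with rfl | rfl
  · exact hx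
  · have hwv : (e : Sym2 V) = s(x, v) := hvw.trans Sym2.eq_swap
    rw [isMiddle_iff_not hM he hwv, isMiddle_iff_not hM' (hverts ▸ he) hwv]
    exact xor_not_not.mpr hx

theorem middleDisagreement_le (hverts : M'.verts = M.verts) :
    middleDisagreement M M' ≤ fromEdgeSet (Subtype.val '' M.verts) := by
  rintro v w ⟨⟨e, he, hx⟩, hne⟩
  exact ⟨⟨e, mem_verts_of_xor hverts (hx v (he ▸ Sym2.mem_mk_left v w)), he⟩, hne⟩

theorem not_isLeaf_middleDisagreement (hM : M.IsMatching) (hM' : M'.IsMatching)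
    (hverts : M'.verts = M.verts) (hmid : HasDistinctMiddles M) :
    ¬ IsLeaf (middleDisagreement M M') u := by
  rintro ⟨w, ⟨⟨e, hew, hx⟩, -⟩, huniq⟩
  obtain ⟨f, hfe, hfx⟩ := exists_ne_xor_isMiddle hM hM' hmid (hx u (Sym2.mem_mk_left u w))
  obtain ⟨w', hfw'⟩ := Sym2.mem_iff_exists.mp (hfx.or.elim (·.1) (·.1))
  obtain rfl := huniq w' (middleDisagreement_adj_of_xor hM hM' hverts hfw' hfx)
  exact hfe (Subtype.ext (hfw'.trans hew.symm))

theorem isMiddle_iff_of_isAcyclic (hM : M.IsMatching) (hM' : M'.IsMatching)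
    (hverts : M'.verts = M.verts) (hmid : HasDistinctMiddles M) (hfin : M.verts.Finite)
    (hacyc : (fromEdgeSet (Subtype.val '' M.verts)).IsAcyclic) :
    IsMiddle M e v ↔ IsMiddle M' e v := by
  by_contra hne
  have hx := (xor_iff_not_iff _ _).mpr hne
  obtain ⟨w, hvw⟩ := Sym2.mem_iff_exists.mp (hx.or.elim (·.1) (·.1))
  have hle := middleDisagreement_le hverts
  have : Finite (middleDisagreement M M').edgeSet :=
    ((hfin.image Subtype.val).subset
      ((edgeSet_mono hle).trans (by simp))).to_subtype
  obtain ⟨x, hx⟩ := exists_isLeaf_of_isAcyclic (hacyc.anti hle)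
    (middleDisagreement_adj_of_xor hM hM' hverts hvw hx)
  exact not_isLeaf_middleDisagreement hM hM' hverts hmid hx

theorem eq_of_isAcyclic (hM : M.IsMatching) (hM' : M'.IsMatching)
    (hverts : M'.verts = M.verts) (hmid : HasDistinctMiddles M) (hfin : M.verts.Finite)
    (hacyc : (fromEdgeSet (Subtype.val '' M.verts)).IsAcyclic) : M' = M := by
  have hiff {e v} := isMiddle_iff_of_isAcyclic (e := e) (v := v) hM hM' hverts hmid hfin hacyc
  refine hM.eq_of_adj_imp hM' hverts fun e f hef => ?_
  obtain ⟨m, hme, hmf⟩ := (lineGraph_adj_iff_exists.mp (M.adj_sub hef)).2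
  have hm : IsMiddle M e m := ⟨hme, f, hef, hmf⟩
  obtain ⟨g, heg, -⟩ := (hiff.mp hm).2
  rcases hmid hm (hiff.mpr ((hiff.mp hm).of_adj hM' heg)) with rfl | h
  · exact absurd rfl heg.ne
  · rwa [hM.eq_of_adj_left hef h]

end Uniqueness

section Star

variable {H : SimpleGraph V} {ι : Type*} [Nonempty ι]

theorem nonempty_iso_edgeInduced_star {c : V} {x : ι → V} (hx : Function.Injective x)
    (hadj : ∀ k, H.Adj c (x k)) :
    Nonempty ((edgeInduced H (Set.range fun k => s(c, x k))).coe ≃g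
      completeBipartiteGraph Unit ι) := by
  set D := edgeInduced H (Set.range fun k => s(c, x k))
  set φ : Unit ⊕ ι → V := Sum.elim (fun _ => c) x
  have hφ : Function.Injective φ :=
    (Function.injective_of_subsingleton _).sumElim hx fun _ k => (hadj k).ne
  have hrange : Set.range φ = D.verts := by
    ext v
    constructor
    · rintro ⟨⟨⟩ | k, rfl⟩
      · obtain ⟨k⟩ := ‹Nonempty ι›
        exact ⟨_, ⟨⟨k, rfl⟩, hadj k⟩, Sym2.mem_mk_left _ _⟩
      · exact ⟨_, ⟨⟨k, rfl⟩, hadj k⟩, Sym2.mem_mk_right _ _⟩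
    · rintro ⟨_, ⟨⟨k, rfl⟩, -⟩, hv⟩
      rcases Sym2.mem_iff.mp hv with rfl | rfl
      exacts [⟨.inl (), rfl⟩, ⟨.inr k, rfl⟩]
  refine ⟨(RelIso.mk ((Equiv.ofInjective φ hφ).trans (Equiv.setCongr hrange)) ?_).symm⟩
  intro p q
  change D.Adj (φ p) (φ q) ↔ _
  rcases p with ⟨⟩ | k <;> rcases q with ⟨⟩ | l <;> simp [D, φ, edgeInduced]
  · exact ⟨⟨l, .inl rfl⟩, hadj l⟩
  · exact ⟨⟨k, .inr rfl⟩, (hadj k).symm⟩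
  · rintro y (⟨h, -⟩ | ⟨h, -⟩)
    exacts [absurd h (hadj k).ne, absurd h (hadj l).ne]

end Star

section Path2

variable {H : SimpleGraph V} {a b c a' b' c' : V}

def IsPath2.fstEdge (h : IsPath2 H a b c) : H.edgeSet := ⟨s(a, b), h.1⟩

def IsPath2.sndEdge (h : IsPath2 H a b c) : H.edgeSet := ⟨s(b, c), h.2.1⟩

theorem IsPath2.lineGraph_adj (h : IsPath2 H a b c) : H.lineGraph.Adj h.fstEdge h.sndEdge := by
  refine lineGraph_adj_iff_exists.mpr
    ⟨fun heq => ?_, b, Sym2.mem_mk_right a b, Sym2.mem_mk_left b c⟩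
  rcases Sym2.eq_iff.mp (Subtype.ext_iff.mp heq) with ⟨hab, -⟩ | ⟨hac, -⟩
  exacts [h.1.ne hab, h.2.2 hac]

theorem path2Edges_union_eq_range (a b c a' c' : V) :
    path2Edges a b c ∪ path2Edges a' b c' = Set.range fun k => s(b, ![a, c, a', c'] k) := by
  ext e
  simp [path2Edges, Fin.exists_fin_succ, Sym2.eq_swap]
  tauto

theorem IsPath2.middle_ne (hP : IsPath2 H a b c) (hP' : IsPath2 H a' b' c')
    (hdisj : Disjoint (path2Edges a b c) (path2Edges a' b' c'))
    (hK : ¬ Nonempty ((edgeInduced H (path2Edges a b c ∪ path2Edges a' b' c')).coe ≃g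
      completeBipartiteGraph Unit (Fin 4))) : b ≠ b' := by
  rintro rfl
  have hne {p q : V} (hp : s(b, p) ∈ path2Edges a b c) (hq : s(b, q) ∈ path2Edges a' b c') :
      p ≠ q := fun hpq => Set.disjoint_left.mp hdisj hp (hpq ▸ hq)
  have haa : a ≠ a' :=
    hne (by simp [path2Edges, Sym2.eq_swap]) (by simp [path2Edges, Sym2.eq_swap])
  have hac : a ≠ c' := hne (by simp [path2Edges, Sym2.eq_swap]) (by simp [path2Edges])
  have hca : c ≠ a' := hne (by simp [path2Edges]) (by simp [path2Edges, Sym2.eq_swap])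
  have hcc : c ≠ c' := hne (by simp [path2Edges]) (by simp [path2Edges])
  have hx : Function.Injective ![a, c, a', c'] := by
    intro k l hkl
    fin_cases k <;> fin_cases l <;> simp_all [hP.2.2, hP'.2.2, eq_comm]
  refine hK ((path2Edges_union_eq_range a b c a' c').symm ▸ nonempty_iso_edgeInduced_star hx ?_)
  intro k
  fin_cases k
  exacts [hP.1.symm, hP.2.1, hP'.1.symm, hP'.2.1]

end Path2

section PathMatching

variable {H : SimpleGraph V} {ι : Type*} {a b c : ι → V}
  (hP : ∀ i, IsPath2 H (a i) (b i) (c i))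

def pathMatching : H.lineGraph.Subgraph :=
  ⨆ i, H.lineGraph.subgraphOfAdj (hP i).lineGraph_adj

theorem pathMatching_adj (i : ι) : (pathMatching hP).Adj (hP i).fstEdge (hP i).sndEdge :=
  Subgraph.iSup_adj.mpr ⟨i, subgraphOfAdj_adj_self _⟩

theorem image_val_verts_pathMatching :
    Subtype.val '' (pathMatching hP).verts = ⋃ i, path2Edges (a i) (b i) (c i) := by
  simp [pathMatching, Set.image_iUnion, Set.image_insert_eq, path2Edges, IsPath2.fstEdge,
    IsPath2.sndEdge]

theorem finite_verts_pathMatching [Finite ι] : (pathMatching hP).verts.Finite := by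
  rw [pathMatching, Subgraph.verts_iSup]
  exact Set.finite_iUnion fun i => by simp

theorem isMatching_pathMatching
    (hdisj : Pairwise fun i j =>
      Disjoint (path2Edges (a i) (b i) (c i)) (path2Edges (a j) (b j) (c j))) :
    (pathMatching hP).IsMatching := by
  refine Subgraph.IsMatching.iSup (fun i => .subgraphOfAdj _) fun i j hij => ?_
  dsimp only
  rw [(Subgraph.IsMatching.subgraphOfAdj _).support_eq_verts,
    (Subgraph.IsMatching.subgraphOfAdj _).support_eq_verts,
    ← Set.disjoint_image_iff Subtype.val_injective]
  simpa [Set.image_insert_eq, path2Edges, IsPath2.fstEdge, IsPath2.sndEdge] using hdisj hij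

theorem exists_of_isMiddle_pathMatching {e : H.edgeSet} {v : V}
    (h : IsMiddle (pathMatching hP) e v) :
    ∃ i, v = b i ∧ (e = (hP i).fstEdge ∨ e = (hP i).sndEdge) := by
  obtain ⟨hve, f, hf, hvf⟩ := h
  obtain ⟨i, hi⟩ := Subgraph.iSup_adj.mp hf
  rw [subgraphOfAdj_adj] at hi
  have hb1 : b i ∈ ((hP i).fstEdge : Sym2 V) := Sym2.mem_mk_right _ _
  have hb2 : b i ∈ ((hP i).sndEdge : Sym2 V) := Sym2.mem_mk_left _ _
  rcases Sym2.eq_iff.mp hi with ⟨rfl, rfl⟩ | ⟨rfl, rfl⟩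
  · exact ⟨i, eq_of_mem_of_lineGraph_adj (hP i).lineGraph_adj hve hvf hb1 hb2, .inl rfl⟩
  · exact ⟨i, eq_of_mem_of_lineGraph_adj (hP i).lineGraph_adj hvf hve hb1 hb2, .inr rfl⟩

theorem hasDistinctMiddles_pathMatching (hb : Function.Injective b) :
    HasDistinctMiddles (pathMatching hP) := by
  intro e g v he hg
  obtain ⟨i, rfl, hei⟩ := exists_of_isMiddle_pathMatching hP he
  obtain ⟨j, hij, hgj⟩ := exists_of_isMiddle_pathMatching hP hg
  obtain rfl := hb hij
  rcases hei with rfl | rfl <;> rcases hgj with rfl | rfl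
  exacts [.inl rfl, .inr (pathMatching_adj hP i), .inr (pathMatching_adj hP i).symm, .inl rfl]

theorem ncard_edgeSet_pathMatching
    (hdisj : Pairwise fun i j =>
      Disjoint (path2Edges (a i) (b i) (c i)) (path2Edges (a j) (b j) (c j))) :
    (pathMatching hP).edgeSet.ncard = Nat.card ι := by
  simp only [pathMatching, Subgraph.edgeSet_iSup, edgeSet_subgraphOfAdj,
    Set.iUnion_singleton_eq_range]
  refine Set.ncard_range_of_injective fun i j hij => by_contra fun hne => ?_
  have hmem : s(a i, b i) ∈ path2Edges (a j) (b j) (c j) := by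
    rcases Sym2.eq_iff.mp hij with ⟨h, -⟩ | ⟨h, -⟩
    · rw [show s(a i, b i) = s(a j, b j) from congrArg Subtype.val h]
      exact Set.mem_insert _ _
    · rw [show s(a i, b i) = s(b j, c j) from congrArg Subtype.val h]
      exact Set.mem_insert_of_mem _ rfl
  exact Set.disjoint_left.mp (hdisj hne) (by simp [path2Edges]) hmem

end PathMatching

theorem line_graph_urm_of_paths_general (H : SimpleGraph V) (ℓ : ℕ)
    (a b c : Fin ℓ → V)
    (hP : ∀ i, IsPath2 H (a i) (b i) (c i))
    (hdisj : ∀ i j, i ≠ j →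
      Disjoint (path2Edges (a i) (b i) (c i)) (path2Edges (a j) (b j) (c j)))
    (hforest : (SimpleGraph.fromEdgeSet (⋃ i, path2Edges (a i) (b i) (c i))).IsAcyclic)
    (hK : ∀ i j, i ≠ j →
      ¬ Nonempty ((edgeInduced H
          (path2Edges (a i) (b i) (c i) ∪ path2Edges (a j) (b j) (c j))).coe ≃g
        completeBipartiteGraph Unit (Fin 4))) :
    ∃ M : (H.lineGraph).Subgraph, IsUniquelyRestricted M ∧ M.edgeSet.ncard = ℓ ∧
      ∀ i, M.Adj ⟨s(a i, b i), (SimpleGraph.mem_edgeSet H).mpr (hP i).1⟩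
        ⟨s(b i, c i), (SimpleGraph.mem_edgeSet H).mpr (hP i).2.1⟩ := by
  have hmatch := isMatching_pathMatching hP hdisj
  have hb : Function.Injective b := fun i j hij => by_contra fun hne =>
    (hP i).middle_ne (hP j) (hdisj i j hne) (hK i j hne) hij
  refine ⟨pathMatching hP, ⟨hmatch, fun M' hverts hM' => ?_⟩, ?_, pathMatching_adj hP⟩
  · refine eq_of_isAcyclic hmatch hM' hverts (hasDistinctMiddles_pathMatching hP hb)
      (finite_verts_pathMatching hP) ?_
    rw [image_val_verts_pathMatching]
    exact hforest
  · simp [ncard_edgeSet_pathMatching hP hdisj]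

/-- if `H` contains `ℓ` pairwise edge-disjoint paths of length 2 whose union is
a forest and no two of which together form an edge-induced subgraph isomorphic to `K_{1,4}`,
then `L(H)` has a uniquely restricted matching of size `ℓ`, namely the matching whose `i`-th
edge joins the two vertices of `L(H)` corresponding to the two edges of `Wᵢ`. -/
theorem line_graph_urm_of_paths (H : SimpleGraph V) (ℓ : ℕ) (hℓ : 0 < ℓ)
    (a b c : Fin ℓ → V)
    (hP : ∀ i, IsPath2 H (a i) (b i) (c i))
    (hdisj : ∀ i j, i ≠ j →
      Disjoint (path2Edges (a i) (b i) (c i)) (path2Edges (a j) (b j) (c j)))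
    (hforest : (SimpleGraph.fromEdgeSet (⋃ i, path2Edges (a i) (b i) (c i))).IsAcyclic)
    (hK : ∀ i j, i ≠ j →
      ¬ Nonempty ((edgeInduced H
          (path2Edges (a i) (b i) (c i) ∪ path2Edges (a j) (b j) (c j))).coe ≃g
        completeBipartiteGraph Unit (Fin 4))) :
    ∃ M : (H.lineGraph).Subgraph, IsUniquelyRestricted M ∧ M.edgeSet.ncard = ℓ ∧
      ∀ i, M.Adj ⟨s(a i, b i), (SimpleGraph.mem_edgeSet H).mpr (hP i).1⟩
        ⟨s(b i, c i), (SimpleGraph.mem_edgeSet H).mpr (hP i).2.1⟩ :=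
  line_graph_urm_of_paths_general H ℓ a b c hP hdisj hforest hK

end URM
end
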